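/- arXiv:2201.01993 — 4 statements merged into one kernel-verified Lean document; each statement's English description precedes it below -/
import Mathlib

section
/- For all real numbers x, y ≥ 0, one has |log⁺ x − log⁺ y| ≤ log(1 + |x − y|), where log⁺ t = max{0, log t} for t > 0 and log⁺ 0 = 0. -/
lemma posLog_aux (x y : ℝ) (hy : 0 ≤ y) (hxy : y ≤ x) :
    max 0 (Real.log x) - max 0 (Real.log y) ≤ Real.log (1 + (x - y)) := by
  have hx : 0 ≤ x := hy.trans hxy
  have hR : (0:ℝ) ≤ Real.log (1 + (x - y)) := by
    apply Real.log_nonneg; linarith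
  rcases le_or_gt x 1 with h1 | h1
  · have : Real.log x ≤ 0 := Real.log_nonpos hx h1
    have : max 0 (Real.log x) = 0 := max_eq_left this
    rw [this]
    have : 0 ≤ max 0 (Real.log y) := le_max_left _ _
    linarith
  · rcases le_or_gt y 1 with h2 | h2
    · have hlx : max 0 (Real.log x) = Real.log x :=
        max_eq_right (Real.log_nonneg h1.le)
      have hly : max 0 (Real.log y) = 0 := max_eq_left (Real.log_nonpos hy h2)
      rw [hlx, hly, sub_zero]
      apply Real.log_le_log (by linarith)
      linarith
    · have hlx : max 0 (Real.log x) = Real.log x :=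
        max_eq_right (Real.log_nonneg h1.le)
      have hly : max 0 (Real.log y) = Real.log y :=
        max_eq_right (Real.log_nonneg h2.le)
      rw [hlx, hly, ← Real.log_div (by linarith) (by linarith)]
      apply Real.log_le_log (by positivity)
      rw [div_le_iff₀ (by linarith)]
      nlinarith

/-- For all `x y ≥ 0`, `|log⁺ x − log⁺ y| ≤ log (1 + |x − y|)`, where
`log⁺ t = max 0 (log t)` (with `log⁺ 0 = 0`, using `Real.log 0 = 0`). -/
theorem abs_posLog_sub_posLog_le (x y : ℝ) (hx : 0 ≤ x) (hy : 0 ≤ y) :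
    |max 0 (Real.log x) - max 0 (Real.log y)| ≤ Real.log (1 + |x - y|) := by
  have mono : ∀ a b : ℝ, 0 ≤ a → a ≤ b → max 0 (Real.log a) ≤ max 0 (Real.log b) := by
    intro a b ha hab
    rcases eq_or_lt_of_le ha with rfl | ha'
    · simp [Real.log_zero]
    · exact max_le_max le_rfl (Real.log_le_log ha' hab)
  rcases le_total y x with h | h
  · rw [abs_of_nonneg (sub_nonneg.mpr h), abs_of_nonneg (sub_nonneg.mpr (mono y x hy h))]
    exact posLog_aux x y hy h
  · rw [abs_of_nonpos (sub_nonpos.mpr h), neg_sub,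
      abs_of_nonpos (sub_nonpos.mpr (mono x y hx h)), neg_sub]
    exact posLog_aux y x hx h
end

section
/- Let (X, μ) be a probability space, let 0 < p < ∞, and let (h_n) be a sequence in L^p(μ) converging almost everywhere to h ∈ L^p(μ). Then ∫|h_n − h|^p dμ → 0 if and only if ∫|h_n|^p dμ → ∫|h|^p dμ. -/
open MeasureTheory Filter Topology

/-!
Both directions are instances of the generalized dominated convergence theorem, with the
dominating sequences `2^p (‖h n - H‖^p + ‖H‖^p)` and `2^p (‖h n‖^p + ‖H‖^p)` given by
`(a + b)^p ≤ 2^p (a^p + b^p)`.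

The generalized theorem reduces to the ordinary one through Scheffé's lemma: if `0 ≤ g n → G`
a.e. and `∫ g n → ∫ G`, then `∫ |g n - G| → 0`, since `|g n - G| = (g n - G) + 2 (G - g n)⁺`
and `(G - g n)⁺ ≤ G`. For `0 ≤ f n ≤ g n`, the truncations `min (f n) G` are dominated by `G`,
and the remaining excess `(f n - G)⁺` is at most `|g n - G|`.
-/

section GeneralizedDominatedConvergence

variable {X : Type*} [MeasurableSpace X] {μ : Measure X}

theorem tendsto_integral_abs_sub_of_tendsto_integral {g : ℕ → X → ℝ} {G : X → ℝ}
    (hg_nonneg : ∀ n, 0 ≤ᵐ[μ] g n) (hg : ∀ n, Integrable (g n) μ) (hG : Integrable G μ)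
    (hg_lim : ∀ᵐ x ∂μ, Tendsto (g · x) atTop (𝓝 (G x)))
    (hg_int : Tendsto (fun n => ∫ x, g n x ∂μ) atTop (𝓝 (∫ x, G x ∂μ))) :
    Tendsto (fun n => ∫ x, |g n x - G x| ∂μ) atTop (𝓝 0) := by
  have hneg_int : ∀ n, Integrable (fun x => max (G x - g n x) 0) μ := fun n =>
    (hG.sub (hg n)).sup (integrable_zero _ _ _)
  have hneg : Tendsto (fun n => ∫ x, max (G x - g n x) 0 ∂μ) atTop (𝓝 0) := by
    have hlim : ∀ᵐ x ∂μ, Tendsto (fun n => max (G x - g n x) 0) atTop (𝓝 0) := by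
      filter_upwards [hg_lim] with x hx
      simpa using ((tendsto_const_nhds (x := G x)).sub hx).max (tendsto_const_nhds (x := (0 : ℝ)))
    simpa using tendsto_integral_of_dominated_convergence (fun x => |G x|)
      (fun n => (hneg_int n).aestronglyMeasurable) hG.abs (fun n => by
        filter_upwards [hg_nonneg n] with x hx
        rw [Real.norm_of_nonneg (le_max_right _ _)]
        exact max_le (by linarith [le_abs_self (G x), show 0 ≤ g n x from hx]) (abs_nonneg _))
      hlim
  have hsplit : ∀ n, ∫ x, |g n x - G x| ∂μ
      = (∫ x, g n x ∂μ - ∫ x, G x ∂μ) + 2 * ∫ x, max (G x - g n x) 0 ∂μ := fun n => calc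
    ∫ x, |g n x - G x| ∂μ = ∫ x, (g n x - G x) + 2 * max (G x - g n x) 0 ∂μ := by
      refine integral_congr_ae (Eventually.of_forall fun x => ?_)
      dsimp only
      rcases le_total (g n x) (G x) with h | h
      · rw [abs_of_nonpos (by linarith), max_eq_left (by linarith)]; ring
      · rw [abs_of_nonneg (by linarith), max_eq_right (by linarith)]; ring
    _ = _ := by
      rw [integral_add (f := fun x => g n x - G x) ((hg n).sub hG) ((hneg_int n).const_mul 2),
        integral_sub (hg n) hG, integral_const_mul]
  simp only [hsplit]
  simpa using (tendsto_sub_nhds_zero_iff.2 hg_int).add (hneg.const_mul 2)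

theorem tendsto_integral_of_le_of_tendsto_integral {f g : ℕ → X → ℝ} {F G : X → ℝ}
    (hf : ∀ n, AEStronglyMeasurable (f n) μ) (hf_nonneg : ∀ n, 0 ≤ᵐ[μ] f n)
    (hfg : ∀ n, f n ≤ᵐ[μ] g n) (hg : ∀ n, Integrable (g n) μ) (hG : Integrable G μ)
    (hf_lim : ∀ᵐ x ∂μ, Tendsto (f · x) atTop (𝓝 (F x)))
    (hg_lim : ∀ᵐ x ∂μ, Tendsto (g · x) atTop (𝓝 (G x)))
    (hg_int : Tendsto (fun n => ∫ x, g n x ∂μ) atTop (𝓝 (∫ x, G x ∂μ))) :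
    Tendsto (fun n => ∫ x, f n x ∂μ) atTop (𝓝 (∫ x, F x ∂μ)) := by
  have hg_nonneg : ∀ n, 0 ≤ᵐ[μ] g n := fun n => (hf_nonneg n).trans (hfg n)
  have hG_nonneg : 0 ≤ᵐ[μ] G := by
    filter_upwards [hg_lim, ae_all_iff.2 hg_nonneg] with x hx h0
    exact ge_of_tendsto' hx h0
  have hFG : F ≤ᵐ[μ] G := by
    filter_upwards [hf_lim, hg_lim, ae_all_iff.2 hfg] with x hfx hgx hle
    exact le_of_tendsto_of_tendsto' hfx hgx hle
  have hf_int : ∀ n, Integrable (f n) μ := fun n => (hg n).mono' (hf n) (by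
    filter_upwards [hf_nonneg n, hfg n] with x h0 hle
    rwa [Real.norm_of_nonneg h0])
  have hmin_int : ∀ n, Integrable (fun x => min (f n x) (G x)) μ := fun n => (hf_int n).inf hG
  have hmin : Tendsto (fun n => ∫ x, min (f n x) (G x) ∂μ) atTop (𝓝 (∫ x, F x ∂μ)) := by
    have hlim : ∀ᵐ x ∂μ, Tendsto (fun n => min (f n x) (G x)) atTop (𝓝 (min (F x) (G x))) := by
      filter_upwards [hf_lim] with x hx
      exact hx.min tendsto_const_nhds
    have := tendsto_integral_of_dominated_convergence G
      (fun n => (hmin_int n).aestronglyMeasurable) hG (fun n => by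
        filter_upwards [hf_nonneg n, hG_nonneg] with x h0 hG0
        rw [Real.norm_of_nonneg (le_min h0 hG0)]
        exact min_le_right _ _) hlim
    rwa [integral_congr_ae (hFG.mono fun x hx => min_eq_left hx)] at this
  have hexcess : Tendsto (fun n => ∫ x, f n x ∂μ - ∫ x, min (f n x) (G x) ∂μ) atTop (𝓝 0) := by
    refine squeeze_zero_norm (fun n => ?_)
      (tendsto_integral_abs_sub_of_tendsto_integral hg_nonneg hg hG hg_lim hg_int)
    rw [← integral_sub (hf_int n) (hmin_int n)]
    refine (norm_integral_le_integral_norm _).trans (integral_mono_ae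
      ((hf_int n).sub (hmin_int n)).norm ((hg n).sub hG).abs ?_)
    filter_upwards [hfg n] with x hle
    rcases le_total (f n x) (G x) with h | h
    · simp [min_eq_left h]
    · rw [min_eq_right h, Real.norm_of_nonneg (by linarith)]
      exact (sub_le_sub_right hle _).trans (le_abs_self _)
  simpa using hexcess.add hmin

theorem tendsto_integral_of_le_const_mul_add {f k : ℕ → X → ℝ} {F K B : X → ℝ} (c : ℝ)
    (hf : ∀ n, AEStronglyMeasurable (f n) μ) (hf_nonneg : ∀ n, 0 ≤ᵐ[μ] f n)
    (hfk : ∀ n, ∀ᵐ x ∂μ, f n x ≤ c * (k n x + B x)) (hk : ∀ n, Integrable (k n) μ)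
    (hK : Integrable K μ) (hB : Integrable B μ)
    (hf_lim : ∀ᵐ x ∂μ, Tendsto (f · x) atTop (𝓝 (F x)))
    (hk_lim : ∀ᵐ x ∂μ, Tendsto (k · x) atTop (𝓝 (K x)))
    (hk_int : Tendsto (fun n => ∫ x, k n x ∂μ) atTop (𝓝 (∫ x, K x ∂μ))) :
    Tendsto (fun n => ∫ x, f n x ∂μ) atTop (𝓝 (∫ x, F x ∂μ)) := by
  refine tendsto_integral_of_le_of_tendsto_integral (G := fun x => c * (K x + B x)) hf hf_nonneg
    hfk (fun n => ((hk n).add hB).const_mul c) ((hK.add hB).const_mul c) hf_lim ?_ ?_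
  · filter_upwards [hk_lim] with x hx
    exact (hx.add_const (B x)).const_mul c
  · simp only [integral_const_mul, integral_add (hk _) hB, integral_add hK hB]
    exact (hk_int.add_const _).const_mul c

end GeneralizedDominatedConvergence

theorem Real.add_rpow_le_two_rpow_mul_rpow_add_rpow {a b p : ℝ} (ha : 0 ≤ a) (hb : 0 ≤ b)
    (hp : 0 ≤ p) : (a + b) ^ p ≤ 2 ^ p * (a ^ p + b ^ p) := calc
  (a + b) ^ p ≤ (2 * max a b) ^ p := by
    rw [two_mul]; gcongr <;> simp
  _ = 2 ^ p * max a b ^ p := Real.mul_rpow zero_le_two (le_max_of_le_left ha)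
  _ = 2 ^ p * max (a ^ p) (b ^ p) := by rw [Real.rpow_max ha hb hp]
  _ ≤ 2 ^ p * (a ^ p + b ^ p) := by
    gcongr; exact max_le_add_of_nonneg (by positivity) (by positivity)

theorem norm_add_rpow_le {E : Type*} [SeminormedAddCommGroup E] {p : ℝ} (hp : 0 ≤ p) (a b : E) :
    ‖a + b‖ ^ p ≤ 2 ^ p * (‖a‖ ^ p + ‖b‖ ^ p) :=
  (Real.rpow_le_rpow (norm_nonneg _) (norm_add_le a b) hp).trans
    (Real.add_rpow_le_two_rpow_mul_rpow_add_rpow (norm_nonneg a) (norm_nonneg b) hp)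

theorem Lp_convergence_iff_norm_convergence_general {X : Type*} [MeasurableSpace X]
    (μ : Measure X)
    (p : ℝ) (hp : 0 < p) (h : ℕ → X → ℂ) (H : X → ℂ)
    (hm : ∀ n, Measurable (h n)) (hM : Measurable H)
    (hint : ∀ n, Integrable (fun x => ‖h n x‖ ^ p) μ)
    (hInt : Integrable (fun x => ‖H x‖ ^ p) μ)
    (hae : ∀ᵐ x ∂μ, Tendsto (fun n => h n x) atTop (nhds (H x))) :
    Tendsto (fun n => ∫ x, ‖h n x - H x‖ ^ p ∂μ) atTop (nhds 0) ↔
      Tendsto (fun n => ∫ x, ‖h n x‖ ^ p ∂μ) atTop (nhds (∫ x, ‖H x‖ ^ p ∂μ)) := by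
  have hu_le : ∀ n x, ‖h n x‖ ^ p ≤ 2 ^ p * (‖h n x - H x‖ ^ p + ‖H x‖ ^ p) := fun n x => by
    simpa using norm_add_rpow_le hp.le (h n x - H x) (H x)
  have hv_le : ∀ n x, ‖h n x - H x‖ ^ p ≤ 2 ^ p * (‖h n x‖ ^ p + ‖H x‖ ^ p) := fun n x => by
    simpa [sub_eq_add_neg] using norm_add_rpow_le hp.le (h n x) (-H x)
  have hv_meas : ∀ n, AEStronglyMeasurable (fun x => ‖h n x - H x‖ ^ p) μ := fun n =>
    (((hm n).sub hM).norm.pow_const p).aestronglyMeasurable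
  have hv_int : ∀ n, Integrable (fun x => ‖h n x - H x‖ ^ p) μ := fun n =>
    (((hint n).add hInt).const_mul (2 ^ p)).mono' (hv_meas n) (Eventually.of_forall fun x => by
      rw [Real.norm_of_nonneg (by positivity)]; exact hv_le n x)
  have hu_lim : ∀ᵐ x ∂μ, Tendsto (fun n => ‖h n x‖ ^ p) atTop (𝓝 (‖H x‖ ^ p)) :=
    hae.mono fun x hx => hx.norm.rpow_const (Or.inr hp.le)
  have hv_lim : ∀ᵐ x ∂μ, Tendsto (fun n => ‖h n x - H x‖ ^ p) atTop (𝓝 0) :=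
    hae.mono fun x hx => by
      simpa [Real.zero_rpow hp.ne'] using (hx.sub_const (H x)).norm.rpow_const (Or.inr hp.le)
  constructor
  · intro hv_int_lim
    exact tendsto_integral_of_le_const_mul_add (K := 0) (2 ^ p)
      (fun n => (hint n).aestronglyMeasurable) (fun n => ae_of_all _ fun x => by positivity)
      (fun n => ae_of_all _ (hu_le n)) hv_int (integrable_zero _ _ _) hInt hu_lim hv_lim
      (by simpa using hv_int_lim)
  · intro hu_int_lim
    simpa using tendsto_integral_of_le_const_mul_add (F := 0) (2 ^ p) hv_meas
      (fun n => ae_of_all _ fun x => by positivity) (fun n => ae_of_all _ (hv_le n)) hint hInt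
      hInt hv_lim hu_lim hu_int_lim

/-- On a probability space, for `0 < p < ∞` and a sequence `h n` in `L^p` converging a.e.
to `h ∈ L^p`, one has `∫ |h n − h|^p → 0` iff `∫ |h n|^p → ∫ |h|^p`. -/
theorem Lp_convergence_iff_norm_convergence {X : Type*} [MeasurableSpace X]
    (μ : Measure X) [IsProbabilityMeasure μ]
    (p : ℝ) (hp : 0 < p) (h : ℕ → X → ℂ) (H : X → ℂ)
    (hm : ∀ n, Measurable (h n)) (hM : Measurable H)
    (hint : ∀ n, Integrable (fun x => ‖h n x‖ ^ p) μ)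
    (hInt : Integrable (fun x => ‖H x‖ ^ p) μ)
    (hae : ∀ᵐ x ∂μ, Tendsto (fun n => h n x) atTop (nhds (H x))) :
    Tendsto (fun n => ∫ x, ‖h n x - H x‖ ^ p ∂μ) atTop (nhds 0) ↔
      Tendsto (fun n => ∫ x, ‖h n x‖ ^ p ∂μ) atTop (nhds (∫ x, ‖H x‖ ^ p ∂μ)) :=
  Lp_convergence_iff_norm_convergence_general μ p hp h H hm hM hint hInt hae
end

section
/- Let u : D₁^∞ → [−∞, ∞) be ∞-subharmonic (upper semicontinuous and subharmonic in each variable separately) on D₁^∞ = ℓ¹ ∩ D^∞, and let a ∈ ℝ. If u ≤ a on D₁^∞ and u(η) = a for some η ∈ D₁^∞, then u is identically equal to a on D₁^∞. -/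
/-!
Along each coordinate disc through a point of `D₁^∞`, `u` is a subharmonic function of one
variable, so the one-variable maximum principle (from the sub-mean value inequality and the
connectedness of the disc) shows that `u = a` on the whole disc once `u = a` at its centre.
Replacing the coordinates of `η` by those of `ζ` one at a time therefore keeps `u = a`; these
finite modifications converge to `ζ` in `ℓ¹`, and upper semicontinuity gives `a ≤ u ζ`.
-/

open MeasureTheory Filter Metric

/-- `v : ℂ → [−∞,∞)` is subharmonic on `s`: upper semicontinuous and satisfying the
sub-mean value inequality on circles (expressed via integrable real majorants). -/
def ESubharmonicOn (v : ℂ → EReal) (s : Set ℂ) : Prop :=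
  UpperSemicontinuousOn v s ∧
    ∀ z ∈ s, ∀ ρ : ℝ, 0 < ρ → closedBall z ρ ⊆ s →
      ∀ f : ℝ → ℝ, IntervalIntegrable f volume 0 (2 * Real.pi) →
        (∀ θ : ℝ, v (z + ρ * Complex.exp (θ * Complex.I)) ≤ (f θ : EReal)) →
        v z ≤ (((2 * Real.pi)⁻¹ * ∫ θ in (0:ℝ)..(2 * Real.pi), f θ : ℝ) : EReal)

section Subharmonic

open Set Real

theorem exists_mem_Ico_circleMap_eq (z w : ℂ) :
    ∃ θ ∈ Ico 0 (2 * π), circleMap z (dist w z) θ = w := by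
  refine ⟨toIcoMod two_pi_pos 0 (Complex.arg (w - z)), toIcoMod_mem_Ico' _ _, ?_⟩
  rw [toIcoMod, (periodic_circleMap _ _).sub_zsmul_eq, circleMap, dist_eq_norm,
    Complex.norm_mul_exp_arg_mul_I, add_sub_cancel]

theorem exists_Ioc_circleMap_of_eventually {P : ℂ → Prop} {w : ℂ} (hP : ∀ᶠ y in nhds w, P y)
    (z : ℂ) : ∃ θ₀ θ₁, 0 ≤ θ₀ ∧ θ₀ < θ₁ ∧ θ₁ ≤ 2 * π ∧
      ∀ θ ∈ Ioc θ₀ θ₁, P (circleMap z (dist w z) θ) := by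
  obtain ⟨θ₀, ⟨h0, h2π⟩, hw⟩ := exists_mem_Ico_circleMap_eq z w
  have hnear : ∀ᶠ θ in nhdsWithin θ₀ (Ioi θ₀), P (circleMap z (dist w z) θ) ∧ θ ≤ 2 * π :=
    nhdsWithin_le_nhds <| ((continuous_circleMap z _).continuousAt.eventually (by rwa [hw])).and
      (eventually_le_nhds (b := (2 * π : ℝ)) h2π)
  obtain ⟨θ₁, hθ₁, hsub⟩ := mem_nhdsGT_iff_exists_Ioc_subset.1 hnear
  exact ⟨θ₀, θ₁, h0, hθ₁, (hsub ⟨hθ₁, le_rfl⟩).2, fun θ hθ => (hsub hθ).1⟩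

theorem intervalIntegral_indicator_Ioc_const {a b s t : ℝ} (has : a ≤ s) (hst : s ≤ t)
    (htb : t ≤ b) (d : ℝ) :
    ∫ x in a..b, (Ioc s t).indicator (fun _ => d) x = (t - s) * d := by
  rw [intervalIntegral.integral_of_le (has.trans (hst.trans htb)),
    integral_indicator measurableSet_Ioc, Measure.restrict_restrict measurableSet_Ioc,
    inter_eq_left.2 (Ioc_subset_Ioc has htb), setIntegral_const, Real.volume_real_Ioc_of_le hst,
    smul_eq_mul]

theorem ESubharmonicOn.lt_of_lt_on_sphere {v : ℂ → EReal} {s : Set ℂ} (hv : ESubharmonicOn v s)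
    (hs : IsOpen s) {z w : ℂ} {a : ℝ} (hz : z ∈ s) (hball : closedBall z (dist w z) ⊆ s)
    (hle : ∀ y ∈ sphere z (dist w z), v y ≤ a) (hw : v w < a) : v z < a := by
  rcases eq_or_ne w z with rfl | hwz
  · exact hw
  set r := dist w z
  obtain ⟨c, hwc, hca⟩ := EReal.exists_between_coe_real hw
  replace hca : c < a := by exact_mod_cast hca
  have hnear : ∀ᶠ y in nhds w, v y < c := by
    simpa only [hs.nhdsWithin_eq (hball (mem_closedBall.2 le_rfl))] using
      hv.1 w (hball (mem_closedBall.2 le_rfl)) c hwc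
  obtain ⟨θ₀, θ₁, h0, h01, h1, harc⟩ := exists_Ioc_circleMap_of_eventually hnear z
  -- Lowering the majorant from `a` to `c` on an arc near `w` pulls the circle mean below `a`.
  set f : ℝ → ℝ := fun θ => a + (Ioc θ₀ θ₁).indicator (fun _ => c - a) θ
  have hmaj : ∀ θ : ℝ, v (z + r * Complex.exp (θ * Complex.I)) ≤ (f θ : EReal) := by
    intro θ
    change v (circleMap z r θ) ≤ f θ
    by_cases hθ : θ ∈ Ioc θ₀ θ₁
    · simpa [f, hθ] using (harc θ hθ).le
    · simpa [f, hθ] using hle _ (circleMap_mem_sphere z dist_nonneg θ)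
  have hind : IntervalIntegrable ((Ioc θ₀ θ₁).indicator fun _ => c - a) volume 0 (2 * π) :=
    (integrableOn_const measure_Ioc_lt_top.ne).integrable_indicator measurableSet_Ioc
      |>.intervalIntegrable
  have hint : ∫ θ in (0:ℝ)..(2 * π), f θ = 2 * π * a + (θ₁ - θ₀) * (c - a) := by
    rw [intervalIntegral.integral_add intervalIntegrable_const hind,
      intervalIntegral.integral_const, intervalIntegral_indicator_Ioc_const h0 h01.le h1,
      smul_eq_mul, sub_zero]
  have hmean := hv.2 z hz r (dist_pos.2 hwz) hball f (intervalIntegrable_const.add hind) hmaj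
  refine hmean.trans_lt (EReal.coe_lt_coe_iff.2 ?_)
  have hdeficit : (θ₁ - θ₀) * (c - a) < 0 := mul_neg_of_pos_of_neg (by linarith) (by linarith)
  rw [hint, mul_add, inv_mul_cancel_left₀ two_pi_pos.ne']
  linarith [mul_neg_of_pos_of_neg (inv_pos.2 two_pi_pos) hdeficit]

theorem ESubharmonicOn.eventually_eq_of_le {v : ℂ → EReal} {s : Set ℂ} (hv : ESubharmonicOn v s)
    (hs : IsOpen s) {a : ℝ} (hle : ∀ y ∈ s, v y ≤ a) {z : ℂ} (hz : z ∈ s) (hza : v z = a) :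
    ∀ᶠ y in nhds z, v y = a := by
  obtain ⟨ε, hε, hεs⟩ := Metric.isOpen_iff.1 hs z hz
  filter_upwards [ball_mem_nhds z hε] with y hy
  have hball : closedBall z (dist y z) ⊆ s := (closedBall_subset_ball hy).trans hεs
  refine (hle y (hball (mem_closedBall.2 le_rfl))).eq_of_not_lt fun hya => ?_
  have hsphere : ∀ x ∈ sphere z (dist y z), v x ≤ a :=
    fun x hx => hle x (hball (sphere_subset_closedBall hx))
  exact (hv.lt_of_lt_on_sphere hs hz hball hsphere hya).ne hza

theorem ESubharmonicOn.eq_of_isPreconnected {v : ℂ → EReal} {s : Set ℂ} (hv : ESubharmonicOn v s)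
    (hs : IsOpen s) (hconn : IsPreconnected s) {a : ℝ} (hle : ∀ y ∈ s, v y ≤ a) {z₀ : ℂ}
    (hz₀ : z₀ ∈ s) (hz₀a : v z₀ = a) : ∀ z ∈ s, v z = a := by
  have hmax : IsOpen {z | z ∈ s ∧ v z = a} := isOpen_iff_mem_nhds.2 fun z ⟨hz, hza⟩ =>
    Filter.Eventually.and (hs.mem_nhds hz) (hv.eventually_eq_of_le hs hle hz hza)
  have hbelow : IsOpen {z | z ∈ s ∧ v z < a} := isOpen_iff_mem_nhds.2 fun z ⟨hz, hza⟩ => by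
    have := hv.1 z hz a hza
    rw [hs.nhdsWithin_eq hz] at this
    exact Filter.Eventually.and (hs.mem_nhds hz) this
  have hcover : s ⊆ {z | z ∈ s ∧ v z = a} ∪ {z | z ∈ s ∧ v z < a} := fun z hz =>
    (hle z hz).eq_or_lt.imp (⟨hz, ·⟩) (⟨hz, ·⟩)
  have hdisj : Disjoint {z | z ∈ s ∧ v z = a} {z | z ∈ s ∧ v z < a} :=
    Set.disjoint_left.2 fun z h h' => h'.2.ne h.2
  exact fun z hz =>
    (hconn.subset_left_of_subset_union hmax hbelow hdisj hcover ⟨z₀, hz₀, hz₀, hz₀a⟩ hz).2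

end Subharmonic

theorem UpperSemicontinuousWithinAt.le_of_tendsto {α β ι : Type*} [TopologicalSpace α]
    [LinearOrder β] {f : α → β} {s : Set α} {x : α} (hf : UpperSemicontinuousWithinAt f s x)
    {l : Filter ι} [l.NeBot] {g : ι → α} (hg : Tendsto g l (nhdsWithin x s)) {b : β}
    (hb : ∀ᶠ i in l, b ≤ f (g i)) : b ≤ f x := by
  by_contra! hlt
  obtain ⟨i, hfi, hbi⟩ := ((hg.eventually (hf b hlt)).and hb).exists
  exact (hfi.trans_le hbi).false

section Splice

variable {E : Type*} [NormedAddCommGroup E] {p : ENNReal}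

noncomputable def lpSplice (ζ η : lp (fun _ : ℕ => E) p) (N : ℕ) : lp (fun _ : ℕ => E) p :=
  η + ∑ j ∈ Finset.range N, lp.single p j (ζ j - η j)

theorem lpSplice_apply (ζ η : lp (fun _ : ℕ => E) p) (N n : ℕ) :
    lpSplice ζ η N n = if n < N then ζ n else η n := by
  rw [lpSplice, lp.coeFn_add, Pi.add_apply, lp.coeFn_sum, Finset.sum_apply]
  simp only [lp.single_apply, Pi.single_apply, Finset.sum_ite_eq, Finset.mem_range]
  split_ifs <;> simp

theorem lpSplice_zero (ζ η : lp (fun _ : ℕ => E) p) : lpSplice ζ η 0 = η := by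
  simp [lpSplice]

theorem lpSplice_succ (ζ η : lp (fun _ : ℕ => E) p) (N : ℕ) :
    lpSplice ζ η (N + 1) = lpSplice ζ η N + lp.single p N (ζ N - lpSplice ζ η N N) := by
  rw [lpSplice_apply, if_neg (lt_irrefl N), lpSplice, lpSplice, Finset.sum_range_succ, add_assoc]

theorem tendsto_lpSplice [Fact (1 ≤ p)] (hp : p ≠ ⊤) (ζ η : lp (fun _ : ℕ => E) p) :
    Tendsto (lpSplice ζ η) atTop (nhds ζ) := by
  have h := (lp.hasSum_single hp (ζ - η)).tendsto_sum_nat.const_add η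
  rwa [add_sub_cancel] at h

end Splice

section Polydisc

variable {p : ENNReal}

theorem add_single_sub_mem_polydisc {ξ : lp (fun _ : ℕ => ℂ) p} (hξ : ∀ n, ‖ξ n‖ < 1) (j : ℕ)
    {z : ℂ} (hz : z ∈ ball (0 : ℂ) 1) :
    ∀ n, ‖(ξ + lp.single p j (z - ξ j) : lp (fun _ : ℕ => ℂ) p) n‖ < 1 := by
  intro n
  rcases eq_or_ne n j with rfl | hnj
  · simpa [lp.single_apply_self] using hz
  · rw [lp.coeFn_add, Pi.add_apply, lp.single_apply_ne _ _ _ hnj, add_zero]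
    exact hξ n

theorem eq_on_coordinate_disc {u : lp (fun _ : ℕ => ℂ) p → EReal} {a : ℝ}
    (hle : ∀ ζ ∈ {ζ : lp (fun _ : ℕ => ℂ) p | ∀ n, ‖ζ n‖ < 1}, u ζ ≤ a)
    {ξ : lp (fun _ : ℕ => ℂ) p} (hξ : ∀ n, ‖ξ n‖ < 1) {j : ℕ}
    (hsub : ESubharmonicOn (fun z => u (ξ + lp.single p j (z - ξ j))) (ball 0 1))
    (hξa : u ξ = a) : ∀ z ∈ ball (0 : ℂ) 1, u (ξ + lp.single p j (z - ξ j)) = a :=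
  hsub.eq_of_isPreconnected isOpen_ball (convex_ball 0 1).isPreconnected
    (fun z hz => hle _ (add_single_sub_mem_polydisc hξ j hz)) (mem_ball_zero_iff.2 (hξ j))
    (by simpa using hξa)

end Polydisc

/-- Maximum principle: if `u` is `∞`-subharmonic on `D₁^∞`, `u ≤ a` there, and `u η = a`
at some point `η ∈ D₁^∞`, then `u ≡ a` on `D₁^∞`. -/
theorem infty_subharmonic_max_principle
    (u : lp (fun _ : ℕ => ℂ) 1 → EReal)
    (D1 : Set (lp (fun _ : ℕ => ℂ) 1))
    (hD1 : D1 = {ζ | ∀ n, ‖ζ n‖ < 1})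
    (husc : UpperSemicontinuousOn u D1)
    (hsub : ∀ ζ ∈ D1, ∀ j : ℕ,
      ESubharmonicOn (fun z => u (ζ + lp.single 1 j (z - ζ j))) (ball (0:ℂ) 1))
    (a : ℝ) (hle : ∀ ζ ∈ D1, u ζ ≤ (a : EReal))
    (η : lp (fun _ : ℕ => ℂ) 1) (hη : η ∈ D1) (hua : u η = (a : EReal)) :
    ∀ ζ ∈ D1, u ζ = (a : EReal) := by
  subst hD1
  intro ζ hζ
  have hmem : ∀ N, lpSplice ζ η N ∈ {ζ : lp (fun _ : ℕ => ℂ) 1 | ∀ n, ‖ζ n‖ < 1} := by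
    intro N n
    rw [lpSplice_apply]
    split_ifs
    exacts [hζ n, hη n]
  have hval : ∀ N, u (lpSplice ζ η N) = a := by
    intro N
    induction N with
    | zero => rwa [lpSplice_zero]
    | succ N ih =>
      rw [lpSplice_succ]
      exact eq_on_coordinate_disc hle (hmem N) (hsub _ (hmem N) N) ih _
        (mem_ball_zero_iff.2 (hζ N))
  have hlim : Tendsto (lpSplice ζ η) atTop (nhdsWithin ζ {ζ | ∀ n, ‖ζ n‖ < 1}) :=
    tendsto_nhdsWithin_iff.2 ⟨tendsto_lpSplice ENNReal.one_ne_top ζ η, .of_forall hmem⟩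
  exact (hle ζ hζ).antisymm
    (UpperSemicontinuousWithinAt.le_of_tendsto (husc ζ hζ) hlim (.of_forall fun N => (hval N).ge))
end

section
/- Let 1 < p < ∞, let K be a nonnegative integrable function on the infinite torus T^∞ with ∫ K dm_∞ = 1, and suppose that the Fourier coefficients of K satisfy K̂(α) = K̂(−α) = 0 for every nonzero finitely supported multi-index α of nonnegative integers. Then inf_{q ∈ P₀} ∫_{T^∞} |1 − q|^p K dm_∞ = 1, where P₀ is the set of analytic polynomials in finitely many variables vanishing at 0. -/
/-!
The vanishing of the analytic Fourier coefficients of `K` says that `∫ q K = 0` for every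
`q ∈ P₀`. Bernoulli's inequality `r ^ p ≥ 1 + p (r - 1)` with `r = |1 - q| ≥ 1 - Re q` gives
`|1 - q| ^ p ≥ 1 - p Re q` pointwise, and integrating against the probability density `K` yields
`∫ |1 - q| ^ p K ≥ 1`, with equality for `q = 0`.
-/

open MeasureTheory ENNReal

noncomputable instance : MeasurableSpace Circle := borel Circle

instance : BorelSpace Circle := ⟨rfl⟩

theorem MeasureTheory.Integrable.continuous_mul_of_compactSpace {X 𝕜 : Type*}
    [TopologicalSpace X] [CompactSpace X] [MeasurableSpace X] [OpensMeasurableSpace X]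
    [RCLike 𝕜] {μ : Measure X} {g K : X → 𝕜} (hK : Integrable K μ) (hg : Continuous g) :
    Integrable (fun x => g x * K x) μ := by
  obtain ⟨C, hC⟩ := isCompact_univ.exists_bound_of_continuousOn hg.continuousOn
  exact hK.bdd_mul hg.aestronglyMeasurable (c := C) (ae_of_all μ fun x => hC x (Set.mem_univ x))

theorem one_sub_mul_re_le_norm_one_sub_rpow {p : ℝ} (hp : 1 ≤ p) (z : ℂ) :
    1 - p * z.re ≤ ‖1 - z‖ ^ p := by
  have bernoulli : 1 + p * (‖1 - z‖ - 1) ≤ ‖1 - z‖ ^ p := by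
    have := one_add_mul_self_le_rpow_one_add (s := ‖1 - z‖ - 1)
      (by linarith [norm_nonneg (1 - z)]) hp
    rwa [add_sub_cancel] at this
  have re_le : 1 - z.re ≤ ‖1 - z‖ := by simpa using Complex.re_le_norm (1 - z)
  nlinarith

theorem one_le_integral_norm_one_sub_rpow_mul {X : Type*} [TopologicalSpace X] [CompactSpace X]
    [MeasurableSpace X] [OpensMeasurableSpace X] {μ : Measure X} {K : X → ℝ}
    (hK0 : ∀ x, 0 ≤ K x) (hK : Integrable K μ) (hK1 : ∫ x, K x ∂μ = 1)
    {f : X → ℂ} (hf : Continuous f) (hfK : ∫ x, f x * K x ∂μ = 0) {p : ℝ} (hp : 1 ≤ p) :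
    1 ≤ ∫ x, ‖1 - f x‖ ^ p * K x ∂μ := by
  have hfK_int : Integrable (fun x => f x * K x) μ := hK.ofReal.continuous_mul_of_compactSpace hf
  have hreK_int : Integrable (fun x => (f x).re * K x) μ := by
    simpa only [RCLike.re_to_complex, Complex.re_mul_ofReal] using hfK_int.re
  have hreK : ∫ x, (f x).re * K x ∂μ = 0 := by
    simpa only [RCLike.re_to_complex, Complex.re_mul_ofReal, hfK, Complex.zero_re]
      using integral_re hfK_int
  have hnorm_cont : Continuous fun x => ‖1 - f x‖ ^ p :=
    (continuous_const.sub hf).norm.rpow_const fun _ => Or.inr (by linarith)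
  calc 1 = ∫ x, (K x - p * ((f x).re * K x)) ∂μ := by
        rw [integral_sub hK (hreK_int.const_mul p), integral_const_mul, hreK, hK1,
          mul_zero, sub_zero]
    _ ≤ ∫ x, ‖1 - f x‖ ^ p * K x ∂μ := by
        refine integral_mono (hK.sub (hreK_int.const_mul p))
          (hK.continuous_mul_of_compactSpace hnorm_cont) fun x => ?_
        have := mul_le_mul_of_nonneg_right (one_sub_mul_re_le_norm_one_sub_rpow hp (f x)) (hK0 x)
        linarith

theorem integral_eval_mul_eq_zero {σ : Type*} [Countable σ] {μ : Measure (σ → Circle)}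
    {K : (σ → Circle) → ℝ} (hK : Integrable K μ)
    (hhat : ∀ α : σ →₀ ℕ, α ≠ 0 →
      ∫ w, (K w : ℂ) * ∏ n ∈ α.support, (w n : ℂ) ^ (α n : ℤ) ∂μ = 0)
    {q : MvPolynomial σ ℂ} (hq : MvPolynomial.constantCoeff q = 0) :
    ∫ w, MvPolynomial.eval (fun n => (w n : ℂ)) q * K w ∂μ = 0 := by
  have hexpand (w : σ → Circle) : MvPolynomial.eval (fun n => (w n : ℂ)) q * K w =
      ∑ α ∈ q.support, MvPolynomial.coeff α q *
        ((∏ n ∈ α.support, (w n : ℂ) ^ (α n : ℤ)) * K w) := by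
    simp_rw [MvPolynomial.eval_eq, Finset.sum_mul, zpow_natCast]
    exact Finset.sum_congr rfl fun α _ => mul_assoc _ _ _
  have hmonomial (α : σ →₀ ℕ) :
      Continuous fun w : σ → Circle => ∏ n ∈ α.support, (w n : ℂ) ^ (α n : ℤ) := by
    simp_rw [zpow_natCast]
    fun_prop
  have hterm_int (α : σ →₀ ℕ) : Integrable (fun w => MvPolynomial.coeff α q *
      ((∏ n ∈ α.support, (w n : ℂ) ^ (α n : ℤ)) * K w)) μ :=
    (hK.ofReal.continuous_mul_of_compactSpace (hmonomial α)).const_mul _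
  rw [integral_congr_ae (ae_of_all _ hexpand), integral_finsetSum _ fun α _ => hterm_int α]
  refine Finset.sum_eq_zero fun α hα => ?_
  have hα0 : α ≠ 0 := by
    rintro rfl
    exact MvPolynomial.mem_support_iff.mp hα hq
  simp_rw [integral_const_mul, mul_comm _ (K _ : ℂ), hhat α hα0, mul_zero]

theorem szego_upper_bound_general
    (μ : Measure (ℕ → Circle))
    (K : (ℕ → Circle) → ℝ) (hK0 : ∀ w, 0 ≤ K w)
    (hKint : Integrable K μ) (hK1 : ∫ w, K w ∂μ = 1) (p : ℝ) (hp : 1 < p)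
    (hhat : ∀ α : ℕ →₀ ℕ, α ≠ 0 →
      (∫ w, (K w : ℂ) * ∏ n ∈ α.support, ((w n : ℂ) ^ (α n : ℤ)) ∂μ) = 0 ∧
      (∫ w, (K w : ℂ) * ∏ n ∈ α.support, ((w n : ℂ) ^ (-(α n : ℤ))) ∂μ) = 0) :
    sInf {t : ℝ | ∃ q : MvPolynomial ℕ ℂ, MvPolynomial.constantCoeff q = 0 ∧
        t = ∫ w, ‖1 - MvPolynomial.eval (fun n => (w n : ℂ)) q‖ ^ p * K w ∂μ}
      = 1 := by
  refine IsLeast.csInf_eq ⟨⟨0, map_zero _, by simpa using hK1.symm⟩, ?_⟩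
  rintro t ⟨q, hq, rfl⟩
  have hq_cont : Continuous fun w : ℕ → Circle => MvPolynomial.eval (fun n => (w n : ℂ)) q :=
    (MvPolynomial.continuous_eval q).comp (by fun_prop)
  exact one_le_integral_norm_one_sub_rpow_mul hK0 hKint hK1 hq_cont
    (integral_eval_mul_eq_zero hKint (fun α hα => (hhat α hα).1) hq) hp.le

/-- Upper bound case of Szegő's problem: if the Fourier coefficients of `K` satisfy
`K̂(α) = K̂(−α) = 0` for all nonzero finitely supported multi-indices `α` of nonnegative
integers, then `S(K) = inf_{q ∈ P₀} ∫ |1 − q|^p K dm_∞ = 1`. -/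
theorem szego_upper_bound
    (μ : Measure (ℕ → Circle)) [μ.IsHaarMeasure] [IsProbabilityMeasure μ]
    (K : (ℕ → Circle) → ℝ) (hK0 : ∀ w, 0 ≤ K w)
    (hKint : Integrable K μ) (hK1 : ∫ w, K w ∂μ = 1) (p : ℝ) (hp : 1 < p)
    (hhat : ∀ α : ℕ →₀ ℕ, α ≠ 0 →
      (∫ w, (K w : ℂ) * ∏ n ∈ α.support, ((w n : ℂ) ^ (α n : ℤ)) ∂μ) = 0 ∧
      (∫ w, (K w : ℂ) * ∏ n ∈ α.support, ((w n : ℂ) ^ (-(α n : ℤ))) ∂μ) = 0) :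
    sInf {t : ℝ | ∃ q : MvPolynomial ℕ ℂ, MvPolynomial.constantCoeff q = 0 ∧
        t = ∫ w, ‖1 - MvPolynomial.eval (fun n => (w n : ℂ)) q‖ ^ p * K w ∂μ}
      = 1 :=
  szego_upper_bound_general μ K hK0 hKint hK1 p hp hhat
end
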